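/- (Second recurrence formula for the Euler–Poisson–Darboux equation.) Let γ = (γ_1,…,γ_n) be a multi-index with all γ_i > 0, let k ∈ ℝ, and let u = u(x,t) be a three times continuously differentiable solution of Δ_γ u = u_tt + (k/t) u_t for x ∈ ℝ^n_+, t > 0. Then v(x,t) = (1/t) ∂u(x,t)/∂t solves Δ_γ v = v_tt + ((k+2)/t) v_t for x ∈ ℝ^n_+, t > 0. -/

import Mathlib

open MeasureTheory Real Set Filter

noncomputable section

/-- Partial derivative in the `i`-th coordinate. -/
def pderiv' {n : ℕ} (i : Fin n) (f : (Fin n → ℝ) → ℝ) (x : Fin n → ℝ) : ℝ :=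
  deriv (fun t => f (Function.update x i t)) (x i)

/-- The Laplace–Bessel operator `Δ_γ = Σ_i (∂²/∂x_i² + (γ_i/x_i) ∂/∂x_i)`. -/
def laplaceBessel {n : ℕ} (γ : Fin n → ℝ) (f : (Fin n → ℝ) → ℝ) (x : Fin n → ℝ) : ℝ :=
  ∑ i, (pderiv' i (pderiv' i f) x + γ i / x i * pderiv' i f x)

/-!
Differentiating the equation in `t`: since the coefficients `γ_i / x_i` of `Δ_γ` do not depend
on `t` and mixed partial derivatives of a `C³` function commute, `w = ∂u/∂t` satisfies
`Δ_γ w = (B_k)_t w - (k/t²) w`. On the other hand `Δ_γ (w/t) = (1/t) Δ_γ w`, and a one-variable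
computation gives `(B_{k+2})_t (w/t) = (1/t) ((B_k)_t w - (k/t²) w)`.
-/

open Topology Function

/-- The Bessel operator `(B_ν)_t = ∂²/∂t² + (ν/t) ∂/∂t`. -/
def besselOp (ν : ℝ) (g : ℝ → ℝ) (t : ℝ) : ℝ :=
  deriv (deriv g) t + ν / t * deriv g t

theorem deriv_besselOp {ν t : ℝ} {g : ℝ → ℝ} (ht : t ≠ 0)
    (hg₁ : DifferentiableAt ℝ (deriv g) t) (hg₂ : DifferentiableAt ℝ (deriv (deriv g)) t) :
    deriv (besselOp ν g) t = besselOp ν (deriv g) t - ν / t ^ 2 * deriv g t := by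
  have h : HasDerivAt (besselOp ν g) (deriv (deriv (deriv g)) t
      + (ν * -(t ^ 2)⁻¹ * deriv g t + ν * t⁻¹ * deriv (deriv g) t)) t :=
    hg₂.hasDerivAt.add (((hasDerivAt_inv ht).const_mul ν).mul hg₁.hasDerivAt)
  rw [h.deriv, besselOp]
  ring

theorem besselOp_inv_mul {ν t : ℝ} {g : ℝ → ℝ} (ht : t ≠ 0)
    (hg : ∀ᶠ s in 𝓝 t, DifferentiableAt ℝ g s) (hg₁ : DifferentiableAt ℝ (deriv g) t) :
    besselOp (ν + 2) (fun s => s⁻¹ * g s) t = t⁻¹ * (besselOp ν g t - ν / t ^ 2 * g t) := by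
  have hderiv : deriv (fun s => s⁻¹ * g s) =ᶠ[𝓝 t]
      fun s => -(s ^ 2)⁻¹ * g s + s⁻¹ * deriv g s := by
    filter_upwards [hg, eventually_ne_nhds ht] with s hgs hs
    exact ((hasDerivAt_inv hs).mul hgs.hasDerivAt).deriv
  have hderiv₂ := (((hasDerivAt_pow 2 t).fun_inv (pow_ne_zero 2 ht)).fun_neg.fun_mul
    hg.self_of_nhds.hasDerivAt).fun_add ((hasDerivAt_inv ht).fun_mul hg₁.hasDerivAt)
  rw [besselOp, hderiv.deriv_eq, hderiv₂.deriv, hderiv.eq_of_nhds, besselOp]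
  field_simp
  ring

section dirDeriv

variable {E F : Type*} [NormedAddCommGroup E] [NormedSpace ℝ E] [NormedAddCommGroup F]
  [NormedSpace ℝ F] {S : Set E} {G : E → F}

def dirDeriv (v : E) (G : E → F) (p : E) : F :=
  fderiv ℝ G p v

theorem ContDiffOn.dirDeriv {m n : WithTop ℕ∞} (hG : ContDiffOn ℝ n G S) (hS : IsOpen S)
    (hmn : m + 1 ≤ n) (v : E) : ContDiffOn ℝ m (dirDeriv v G) S :=
  (hG.fderiv_of_isOpen hS hmn).clm_apply contDiffOn_const

theorem dirDeriv_dirDeriv_eq {p : E} (hd : DifferentiableAt ℝ (fderiv ℝ G) p) (v w : E) :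
    dirDeriv v (dirDeriv w G) p = fderiv ℝ (fderiv ℝ G) p v w := by
  unfold dirDeriv
  rw [fderiv_clm_apply hd (differentiableAt_const w)]
  simp

theorem dirDeriv_comm (hG : ContDiffOn ℝ 2 G S) (hS : IsOpen S) {p : E} (hp : p ∈ S) (v w : E) :
    dirDeriv v (dirDeriv w G) p = dirDeriv w (dirDeriv v G) p := by
  have hd : DifferentiableAt ℝ (fderiv ℝ G) p :=
    ((hG.fderiv_of_isOpen hS le_rfl).contDiffAt (hS.mem_nhds hp)).differentiableAt one_ne_zero
  rw [dirDeriv_dirDeriv_eq hd, dirDeriv_dirDeriv_eq hd]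
  exact (hG.contDiffAt (hS.mem_nhds hp)).isSymmSndFDerivAt (by simp) v w

theorem dirDeriv_dirDeriv_comm (hG : ContDiffOn ℝ 3 G S) (hS : IsOpen S) {p : E} (hp : p ∈ S)
    (v w : E) :
    dirDeriv v (dirDeriv v (dirDeriv w G)) p = dirDeriv w (dirDeriv v (dirDeriv v G)) p := by
  have hinner : dirDeriv v (dirDeriv w G) =ᶠ[𝓝 p] dirDeriv w (dirDeriv v G) :=
    eventually_of_mem (hS.mem_nhds hp) fun q hq => dirDeriv_comm (hG.of_le (by norm_num)) hS hq v w
  rw [dirDeriv, hinner.fderiv_eq]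
  exact dirDeriv_comm (hG.dirDeriv hS (by norm_num) v) hS hp v w

end dirDeriv

theorem Filter.EventuallyEq.pderiv'_eq {n : ℕ} {f g : (Fin n → ℝ) → ℝ} {x : Fin n → ℝ}
    (h : f =ᶠ[𝓝 x] g) (i : Fin n) : pderiv' i f x = pderiv' i g x := by
  have hupdate : Tendsto (update x i) (𝓝 (x i)) (𝓝 x) :=
    (continuous_const.update i continuous_id).tendsto' (x i) x (by simp)
  exact (h.comp_tendsto hupdate).deriv_eq

theorem Filter.EventuallyEq.pderiv' {n : ℕ} {f g : (Fin n → ℝ) → ℝ} {x : Fin n → ℝ}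
    (h : f =ᶠ[𝓝 x] g) (i : Fin n) : pderiv' i f =ᶠ[𝓝 x] pderiv' i g :=
  h.eventuallyEq_nhds.mono fun _ hy => hy.pderiv'_eq i

theorem laplaceBessel_congr {n : ℕ} (γ : Fin n → ℝ) {f g : (Fin n → ℝ) → ℝ} {x : Fin n → ℝ}
    (h : f =ᶠ[𝓝 x] g) : laplaceBessel γ f x = laplaceBessel γ g x := by
  unfold laplaceBessel
  refine Finset.sum_congr rfl fun i _ => ?_
  rw [(h.pderiv' i).pderiv'_eq i, h.pderiv'_eq i]

theorem laplaceBessel_const_mul {n : ℕ} (γ : Fin n → ℝ) (c : ℝ) (f : (Fin n → ℝ) → ℝ)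
    (x : Fin n → ℝ) : laplaceBessel γ (fun y => c * f y) x = c * laplaceBessel γ f x := by
  have hpderiv : ∀ (i : Fin n) (f : (Fin n → ℝ) → ℝ),
      pderiv' i (fun y => c * f y) = fun y => c * pderiv' i f y :=
    fun i f => funext fun y => deriv_const_mul_field c
  simp only [laplaceBessel, hpderiv, Finset.mul_sum, mul_add, mul_left_comm]

section slice

variable {n : ℕ} {S : Set ((Fin n → ℝ) × ℝ)} {G : (Fin n → ℝ) × ℝ → ℝ} {x : Fin n → ℝ} {t : ℝ}

def laplaceBesselFst (γ : Fin n → ℝ) (G : (Fin n → ℝ) × ℝ → ℝ) (p : (Fin n → ℝ) × ℝ) : ℝ :=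
  ∑ i, (dirDeriv (Pi.single i 1, 0) (dirDeriv (Pi.single i 1, 0) G) p
    + γ i / p.1 i * dirDeriv (Pi.single i 1, 0) G p)

theorem hasDerivAt_slice_snd (hG : DifferentiableAt ℝ G (x, t)) :
    HasDerivAt (fun s => G (x, s)) (dirDeriv (0, 1) G (x, t)) t :=
  hG.hasFDerivAt.comp_hasDerivAt t ((hasDerivAt_const t x).prodMk (hasDerivAt_id t))

theorem pderiv'_slice (hG : DifferentiableAt ℝ G (x, t)) (i : Fin n) :
    pderiv' i (fun y => G (y, t)) x = dirDeriv (Pi.single i 1, 0) G (x, t) := by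
  have hG' : HasFDerivAt G (fderiv ℝ G (x, t)) (update x i (x i), t) := by
    rw [update_eq_self]
    exact hG.hasFDerivAt
  exact (hG'.comp_hasDerivAt (x i)
    ((hasDerivAt_update x i (x i)).prodMk (hasDerivAt_const (x i) t))).deriv

theorem eventually_mem_slice_fst (hS : IsOpen S) (hp : (x, t) ∈ S) :
    ∀ᶠ y in 𝓝 x, (y, t) ∈ S :=
  (continuous_id.prodMk continuous_const).continuousAt.preimage_mem_nhds (hS.mem_nhds hp)

theorem eventually_mem_slice_snd (hS : IsOpen S) (hp : (x, t) ∈ S) :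
    ∀ᶠ s in 𝓝 t, (x, s) ∈ S :=
  (continuous_const.prodMk continuous_id).continuousAt.preimage_mem_nhds (hS.mem_nhds hp)

theorem laplaceBessel_slice (γ : Fin n → ℝ) (hS : IsOpen S) (hG : ContDiffOn ℝ 2 G S)
    (hp : (x, t) ∈ S) : laplaceBessel γ (fun y => G (y, t)) x = laplaceBesselFst γ G (x, t) := by
  have hdiff : ∀ {H : (Fin n → ℝ) × ℝ → ℝ}, ContDiffOn ℝ 1 H S → ∀ {q}, q ∈ S →
      DifferentiableAt ℝ H q :=
    fun hH _ hq => (hH.differentiableOn one_ne_zero).differentiableAt (hS.mem_nhds hq)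
  have hG₁ : ContDiffOn ℝ 1 G S := hG.of_le one_le_two
  refine Finset.sum_congr rfl fun i _ => ?_
  have hinner : pderiv' i (fun y => G (y, t)) =ᶠ[𝓝 x]
      fun y => dirDeriv (Pi.single i 1, 0) G (y, t) :=
    (eventually_mem_slice_fst hS hp).mono fun y hy => pderiv'_slice (hdiff hG₁ hy) i
  rw [hinner.pderiv'_eq, pderiv'_slice (hdiff (hG.dirDeriv hS le_rfl _) hp),
    pderiv'_slice (hdiff hG₁ hp)]

theorem hasDerivAt_laplaceBesselFst (γ : Fin n → ℝ) (hS : IsOpen S) (hG : ContDiffOn ℝ 3 G S)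
    (hp : (x, t) ∈ S) :
    HasDerivAt (fun s => laplaceBesselFst γ G (x, s))
      (laplaceBesselFst γ (dirDeriv (0, 1) G) (x, t)) t := by
  have hdiff : ∀ {H : (Fin n → ℝ) × ℝ → ℝ}, ContDiffOn ℝ 1 H S → DifferentiableAt ℝ H (x, t) :=
    fun hH => (hH.differentiableOn one_ne_zero).differentiableAt (hS.mem_nhds hp)
  refine HasDerivAt.fun_sum fun i _ => ?_
  rw [dirDeriv_dirDeriv_comm hG hS hp, dirDeriv_comm (hG.of_le (by norm_num)) hS hp]
  have hGi : ContDiffOn ℝ 2 (dirDeriv (Pi.single i 1, 0) G) S := hG.dirDeriv hS (by norm_num) _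
  exact (hasDerivAt_slice_snd (hdiff (hGi.dirDeriv hS le_rfl _))).add
    ((hasDerivAt_slice_snd (hdiff (hGi.of_le one_le_two))).const_mul (γ i / x i))

theorem hasDerivAt_laplaceBessel_slice (γ : Fin n → ℝ) (hS : IsOpen S) (hG : ContDiffOn ℝ 3 G S)
    (hp : (x, t) ∈ S) :
    HasDerivAt (fun s => laplaceBessel γ (fun y => G (y, s)) x)
      (laplaceBessel γ (fun y => deriv (fun s => G (y, s)) t) x) t := by
  have hdiff : ∀ {q}, q ∈ S → DifferentiableAt ℝ G q :=
    fun hq => (hG.differentiableOn (by norm_num)).differentiableAt (hS.mem_nhds hq)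
  have hderiv : (fun y => deriv (fun s => G (y, s)) t) =ᶠ[𝓝 x]
      fun y => dirDeriv (0, 1) G (y, t) :=
    (eventually_mem_slice_fst hS hp).mono fun y hy => (hasDerivAt_slice_snd (hdiff hy)).deriv
  have hslice : (fun s => laplaceBessel γ (fun y => G (y, s)) x) =ᶠ[𝓝 t]
      fun s => laplaceBesselFst γ G (x, s) :=
    (eventually_mem_slice_snd hS hp).mono fun s hs =>
      laplaceBessel_slice γ hS (hG.of_le (by norm_num)) hs
  rw [laplaceBessel_congr γ hderiv, laplaceBessel_slice γ hS (hG.dirDeriv hS le_rfl _) hp]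
  exact (hasDerivAt_laplaceBesselFst γ hS hG hp).congr_of_eventuallyEq hslice

end slice

theorem EPD_second_recurrence_general
    (n : ℕ) (γ : Fin n → ℝ) (k : ℝ)
    (u : (Fin n → ℝ) → ℝ → ℝ)
    (hu : ContDiffOn ℝ 3 (fun p : (Fin n → ℝ) × ℝ => u p.1 p.2)
      {p | (∀ i, 0 < p.1 i) ∧ 0 < p.2})
    (hpde : ∀ x : Fin n → ℝ, (∀ i, 0 < x i) → ∀ t : ℝ, 0 < t →
      laplaceBessel γ (fun x' => u x' t) x
        = deriv (deriv (u x)) t + k / t * deriv (u x) t) :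
    ∀ x : Fin n → ℝ, (∀ i, 0 < x i) → ∀ t : ℝ, 0 < t →
      laplaceBessel γ (fun x' => (1 / t) * deriv (u x') t) x
        = deriv (deriv (fun s : ℝ => (1 / s) * deriv (u x) s)) t
            + (k + 2) / t * deriv (fun s : ℝ => (1 / s) * deriv (u x) s) t := by
  intro x hx t ht
  have hS : IsOpen {p : (Fin n → ℝ) × ℝ | (∀ i, 0 < p.1 i) ∧ 0 < p.2} := by
    simp only [ofPred_and, ofPred_forall]
    exact (isOpen_iInter_of_finite fun i => isOpen_lt continuous_const (by fun_prop)).inter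
      (isOpen_lt continuous_const continuous_snd)
  have hux : ContDiffOn ℝ 3 (u x) (Ioi 0) :=
    hu.comp (contDiff_const.prodMk contDiff_id).contDiffOn fun s hs => ⟨hx, hs⟩
  have hux₁ : ContDiffOn ℝ 2 (deriv (u x)) (Ioi 0) := hux.deriv_of_isOpen isOpen_Ioi le_rfl
  have hdu : ∀ s ∈ Ioi (0 : ℝ), DifferentiableAt ℝ (deriv (u x)) s := fun s hs =>
    (hux₁.differentiableOn two_ne_zero).differentiableAt (Ioi_mem_nhds hs)
  have hddu : DifferentiableAt ℝ (deriv (deriv (u x))) t :=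
    ((hux₁.deriv_of_isOpen isOpen_Ioi le_rfl).differentiableOn one_ne_zero).differentiableAt
      (Ioi_mem_nhds ht)
  have hpde_near : (fun s => laplaceBessel γ (fun y => u y s) x) =ᶠ[𝓝 t] besselOp k (u x) :=
    eventually_of_mem (Ioi_mem_nhds ht) fun s hs => hpde x hx s hs
  have hpde_deriv : laplaceBessel γ (fun y => deriv (u y) t) x
      = besselOp k (deriv (u x)) t - k / t ^ 2 * deriv (u x) t := by
    rw [← deriv_besselOp ht.ne' (hdu t ht) hddu, ← hpde_near.deriv_eq]
    exact ((hasDerivAt_laplaceBessel_slice γ hS hu ⟨hx, ht⟩).deriv).symm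
  show _ = besselOp (k + 2) (fun s => 1 / s * deriv (u x) s) t
  simp only [one_div]
  rw [laplaceBessel_const_mul, hpde_deriv,
    besselOp_inv_mul ht.ne' (eventually_of_mem (Ioi_mem_nhds ht) hdu) hddu]

/-- Second recurrence formula for the Euler–Poisson–Darboux equation.
If `u` is a three times continuously differentiable solution of `Δ_γ u = u_tt + (k/t) u_t` on
`ℝ^n_+ × (0,∞)`, then `v(x,t) = (1/t) ∂u/∂t` solves `Δ_γ v = v_tt + ((k+2)/t) v_t` there. -/
theorem EPD_second_recurrence
    (n : ℕ) (γ : Fin n → ℝ) (hγ : ∀ i, 0 < γ i) (k : ℝ)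
    (u : (Fin n → ℝ) → ℝ → ℝ)
    (hu : ContDiffOn ℝ 3 (fun p : (Fin n → ℝ) × ℝ => u p.1 p.2)
      {p | (∀ i, 0 < p.1 i) ∧ 0 < p.2})
    (hpde : ∀ x : Fin n → ℝ, (∀ i, 0 < x i) → ∀ t : ℝ, 0 < t →
      laplaceBessel γ (fun x' => u x' t) x
        = deriv (deriv (u x)) t + k / t * deriv (u x) t) :
    ∀ x : Fin n → ℝ, (∀ i, 0 < x i) → ∀ t : ℝ, 0 < t →
      laplaceBessel γ (fun x' => (1 / t) * deriv (u x') t) x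
        = deriv (deriv (fun s : ℝ => (1 / s) * deriv (u x) s)) t
            + (k + 2) / t * deriv (fun s : ℝ => (1 / s) * deriv (u x) s) t :=
  EPD_second_recurrence_general n γ k u hu hpde
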